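/- arXiv:1709.07100 — 3 statements merged into one kernel-verified Lean document; each statement's English description precedes it below -/
import Mathlib

section
/- Let A be a real symmetric n×n matrix. If for every h > 0 the matrix with entries exp(−A_{ij}/h) is positive semidefinite, then A is conditionally negative semidefinite, i.e. Σ_{i,j} c_i c_j A_{ij} ≤ 0 for every vector c ∈ ℝⁿ with Σ_i c_i = 0. (This is the matrix form of the Schoenberg-type argument underlying the theorem of Feragen et al. that a geodesic Gaussian kernel can be positive definite for all bandwidths only on a flat space.) -/
/-!
When `∑ cᵢ = 0`, subtracting the all-ones matrix does not change the quadratic form of `c`, so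
`∑ cᵢ cⱼ h (exp (-Aᵢⱼ / h) - 1) = h ∑ cᵢ cⱼ exp (-Aᵢⱼ / h) ≥ 0`. As `h → ∞`, the left side
tends to `-∑ cᵢ cⱼ Aᵢⱼ`, since `h (exp (-a / h) - 1) → -a`.
-/

open Matrix Filter Topology

theorem Real.tendsto_mul_exp_neg_div_sub_one (a : ℝ) :
    Tendsto (fun h : ℝ => h * (Real.exp (-a / h) - 1)) atTop (𝓝 (-a)) := by
  have hderiv : HasDerivAt (fun t => Real.exp (-a * t)) (-a) 0 := by
    simpa using ((hasDerivAt_id (0 : ℝ)).const_mul (-a)).exp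
  -- `h * (exp (-a / h) - 1)` is the difference quotient of `t ↦ exp (-a t)` at `0` with step `1 / h`.
  have hslope := (hasDerivAt_iff_tendsto_slope.1 hderiv).comp
    (tendsto_nhdsWithin_mono_right (fun _ ht => ne_of_gt ht) tendsto_inv_atTop_nhdsGT_zero)
  refine hslope.congr fun h => ?_
  simp [slope, div_eq_mul_inv]

theorem Matrix.PosSemidef.sum_sum_mul_mul_nonneg {ι : Type*} [Fintype ι] {M : Matrix ι ι ℝ}
    (hM : M.PosSemidef) (c : ι → ℝ) : 0 ≤ ∑ i, ∑ j, c i * c j * M i j := by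
  refine (hM.dotProduct_mulVec_nonneg c).trans_eq ?_
  simp only [star_trivial, dotProduct, mulVec, Finset.mul_sum]
  exact Finset.sum_congr rfl fun i _ => Finset.sum_congr rfl fun j _ => by ring

theorem sum_sum_mul_mul_sub_const_of_sum_eq_zero {ι : Type*} [Fintype ι] {c : ι → ℝ}
    (hc : ∑ i, c i = 0) (M : ι → ι → ℝ) (b : ℝ) :
    ∑ i, ∑ j, c i * c j * (M i j - b) = ∑ i, ∑ j, c i * c j * M i j := by
  simp only [mul_sub, Finset.sum_sub_distrib, ← Finset.sum_mul, ← Finset.mul_sum, hc]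
  ring

theorem condNegSemidef_of_exp_posSemidef_general {n : ℕ} (A : Matrix (Fin n) (Fin n) ℝ)
    (hexp : ∀ h : ℝ, 0 < h →
      (Matrix.of fun i j => Real.exp (-(A i j) / h)).PosSemidef) :
    ∀ c : Fin n → ℝ, (∑ i, c i) = 0 →
      ∑ i : Fin n, ∑ j : Fin n, c i * c j * A i j ≤ 0 := by
  intro c hc
  have hlim : Tendsto (fun h => ∑ i, ∑ j, c i * c j * (h * (Real.exp (-(A i j) / h) - 1)))
      atTop (𝓝 (∑ i, ∑ j, c i * c j * -A i j)) :=
    tendsto_finsetSum _ fun i _ => tendsto_finsetSum _ fun j _ =>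
      (Real.tendsto_mul_exp_neg_div_sub_one (A i j)).const_mul _
  have hnonneg : ∀ᶠ h in atTop,
      0 ≤ ∑ i, ∑ j, c i * c j * (h * (Real.exp (-(A i j) / h) - 1)) := by
    filter_upwards [eventually_gt_atTop 0] with h hh
    simp only [mul_left_comm _ h, ← Finset.mul_sum]
    rw [sum_sum_mul_mul_sub_const_of_sum_eq_zero hc]
    exact mul_nonneg hh.le ((hexp h hh).sum_sum_mul_mul_nonneg c)
  simpa only [mul_neg, Finset.sum_neg_distrib, Left.nonneg_neg_iff] using
    ge_of_tendsto hlim hnonneg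

/-- Matrix form of the Schoenberg-type argument: if for every bandwidth `h > 0` the matrix
with entries `exp (−A i j / h)` is positive semidefinite, then the symmetric matrix `A`
is conditionally negative semidefinite. -/
theorem condNegSemidef_of_exp_posSemidef {n : ℕ} (A : Matrix (Fin n) (Fin n) ℝ)
    (hA : A.IsSymm)
    (hexp : ∀ h : ℝ, 0 < h →
      (Matrix.of fun i j => Real.exp (-(A i j) / h)).PosSemidef) :
    ∀ c : Fin n → ℝ, (∑ i, c i) = 0 →
      ∑ i : Fin n, ∑ j : Fin n, c i * c j * A i j ≤ 0 :=
  condNegSemidef_of_exp_posSemidef_general A hexp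
end

section
/- Let A be a real symmetric n×n matrix with zero diagonal that is conditionally negative semidefinite, i.e. Σ_{i,j} c_i c_j A_{ij} ≤ 0 for every vector c ∈ ℝⁿ with Σ_i c_i = 0. Then for every t > 0 the matrix with entries exp(−t A_{ij}) is positive semidefinite. (Schoenberg's theorem, the converse direction used in characterizing when exponential kernels built from a metric are positive definite.) -/
/-!
Fix an index `p`. The matrix `B i j = A i p + A p j - A i j - A p p` equals `-(Pᵀ A P)` for the
projection `P c = c - (∑ i, c i) • Pi.single p 1` onto the zero-sum vectors, so conditional
negativity of `A` makes `B` positive semidefinite. By the Schur product theorem all Hadamard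
powers of `B` are positive semidefinite, hence so is its entrywise exponential, a convergent
sum of them with positive coefficients. Finally `exp (-A i j) = d i * exp (B i j) * d j` with
`d i = exp (A p p / 2 - A i p)`, a congruence by a diagonal matrix.
-/

open Matrix
open scoped ComplexOrder

namespace Matrix

variable {ι : Type*}

theorem dotProduct_mulVec_self_eq_sum_sum {R : Type*} [CommSemiring R] [Fintype ι]
    (x : ι → R) (N : Matrix ι ι R) : x ⬝ᵥ (N *ᵥ x) = ∑ i, ∑ j, x i * x j * N i j := by
  rw [dot_mulVec_eq_sum_sum, Finset.sum_comm]
  simp only [mul_right_comm]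

theorem PosSemidef.map_pow {𝕜 : Type*} [RCLike 𝕜] [Fintype ι] {M : Matrix ι ι 𝕜}
    (hM : M.PosSemidef) (k : ℕ) : (M.map (· ^ k)).PosSemidef := by
  induction k with
  | zero =>
    convert posSemidef_vecMulVec_self_star (fun _ : ι => (1 : 𝕜)) using 1
    ext i j
    simp [vecMulVec]
  | succ k ih =>
    convert ih.hadamard hM using 1
    ext i j
    simp [pow_succ]

variable [Fintype ι]

theorem PosSemidef.map_exp {M : Matrix ι ι ℝ} (hM : M.PosSemidef) :
    (M.map Real.exp).PosSemidef := by
  refine .of_dotProduct_mulVec_nonneg (hM.isHermitian.map _ fun _ => rfl) fun x => ?_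
  simp only [star_trivial, dotProduct_mulVec_self_eq_sum_sum, map_apply]
  have hseries : HasSum (fun k => ∑ i, ∑ j, x i * x j * (M i j ^ k / k.factorial))
      (∑ i, ∑ j, x i * x j * Real.exp (M i j)) := by
    rw [Real.exp_eq_exp_ℝ]
    exact hasSum_sum fun i _ => hasSum_sum fun j _ =>
      (NormedSpace.expSeries_div_hasSum_exp (M i j)).mul_left _
  refine hseries.nonneg fun k => ?_
  have hpow := (hM.map_pow k).dotProduct_mulVec_nonneg x
  simp only [star_trivial, dotProduct_mulVec_self_eq_sum_sum, map_apply] at hpow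
  simpa only [← mul_div_assoc, ← Finset.sum_div] using div_nonneg hpow (Nat.cast_nonneg _)

def CondNegSemidef (A : Matrix ι ι ℝ) : Prop :=
  ∀ c : ι → ℝ, ∑ i, c i = 0 → c ⬝ᵥ (A *ᵥ c) ≤ 0

theorem CondNegSemidef.smul {A : Matrix ι ι ℝ} (hA : A.CondNegSemidef) {t : ℝ} (ht : 0 ≤ t) :
    (t • A).CondNegSemidef := fun c hc => by
  rw [smul_mulVec, dotProduct_smul, smul_eq_mul]
  exact mul_nonpos_of_nonneg_of_nonpos ht (hA c hc)

theorem CondNegSemidef.posSemidef_centered [DecidableEq ι] {A : Matrix ι ι ℝ}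
    (hA : A.CondNegSemidef) (hsymm : A.IsSymm) (p : ι) :
    (of fun i j => A i p + A p j - A i j - A p p).PosSemidef := by
  refine .of_dotProduct_mulVec_nonneg ?_ fun c => ?_
  · ext i j
    simp only [conjTranspose_apply, of_apply, star_trivial, hsymm.apply]
    ring
  set s := ∑ i, c i
  have hBc : (of fun i j => A i p + A p j - A i j - A p p) *ᵥ c =
      s • A.col p + (A *ᵥ c) p • 1 - A *ᵥ c - (s * A p p) • 1 := by
    ext i
    simp only [mulVec, dotProduct, of_apply, Pi.add_apply, Pi.sub_apply, Pi.smul_apply,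
      col_apply, Pi.one_apply, smul_eq_mul, add_mul, sub_mul, Finset.sum_add_distrib,
      Finset.sum_sub_distrib, ← Finset.mul_sum, s]
    ring
  set d := c - s • Pi.single p 1
  have hd : ∑ i, d i = 0 := by simp [d, s, Pi.single_apply]
  have hAd : d ⬝ᵥ (A *ᵥ d) =
      c ⬝ᵥ (A *ᵥ c) - s * (c ⬝ᵥ A.col p) - s * (A *ᵥ c) p + s * s * A p p := by
    simp only [d, mulVec_sub, mulVec_smul, sub_dotProduct, dotProduct_sub, smul_dotProduct,
      dotProduct_smul, mulVec_single_one, single_one_dotProduct, smul_eq_mul, col_apply]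
    ring
  rw [star_trivial, hBc]
  simp only [dotProduct_add, dotProduct_sub, dotProduct_smul, dotProduct_one, smul_eq_mul]
  linarith [hA d hd]

theorem CondNegSemidef.posSemidef_map_exp_neg {A : Matrix ι ι ℝ} (hA : A.CondNegSemidef)
    (hsymm : A.IsSymm) : (A.map fun a => Real.exp (-a)).PosSemidef := by
  classical
  rcases isEmpty_or_nonempty ι with _ | ⟨⟨p⟩⟩
  · rw [Subsingleton.elim (A.map _) 0]
    exact .zero
  let D := diagonal fun i => Real.exp (A p p / 2 - A i p)
  have hfactor : A.map (fun a => Real.exp (-a)) =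
      Dᴴ * (of fun i j => A i p + A p j - A i j - A p p).map Real.exp * D := by
    ext i j
    simp only [D, map_apply, diagonal_conjTranspose, star_trivial, diagonal_mul, mul_diagonal,
      of_apply, ← Real.exp_add, hsymm.apply p j]
    ring_nf
  rw [hfactor]
  exact ((hA.posSemidef_centered hsymm p).map_exp).conjTranspose_mul_mul_same D

end Matrix

theorem exp_posSemidef_of_condNegSemidef_general {n : ℕ} (A : Matrix (Fin n) (Fin n) ℝ)
    (hA : A.IsSymm)
    (hcnsd : ∀ c : Fin n → ℝ, (∑ i, c i) = 0 →
      ∑ i : Fin n, ∑ j : Fin n, c i * c j * A i j ≤ 0) :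
    ∀ t : ℝ, 0 < t →
      (Matrix.of fun i j => Real.exp (-t * A i j)).PosSemidef := by
  intro t ht
  have hcnd : A.CondNegSemidef := fun c hc => by
    simpa only [dotProduct_mulVec_self_eq_sum_sum] using hcnsd c hc
  convert (hcnd.smul ht.le).posSemidef_map_exp_neg (hA.smul t) using 1
  ext i j
  simp

/-- Schoenberg's theorem (matrix form, converse direction): if `A` is a real symmetric
matrix with zero diagonal that is conditionally negative semidefinite, then for every
`t > 0` the matrix with entries `exp (−t * A i j)` is positive semidefinite. -/
theorem exp_posSemidef_of_condNegSemidef {n : ℕ} (A : Matrix (Fin n) (Fin n) ℝ)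
    (hA : A.IsSymm) (hdiag : ∀ i, A i i = 0)
    (hcnsd : ∀ c : Fin n → ℝ, (∑ i, c i) = 0 →
      ∑ i : Fin n, ∑ j : Fin n, c i * c j * A i j ≤ 0) :
    ∀ t : ℝ, 0 < t →
      (Matrix.of fun i j => Real.exp (-t * A i j)).PosSemidef :=
  exp_posSemidef_of_condNegSemidef_general A hA hcnsd
end

section
/- Let H be a real inner product space and h > 0. Then for all points x₁, …, x_n ∈ H and all real coefficients c₁, …, c_n, Σ_{i,j} c_i c_j exp(−‖x_i − x_j‖/h) ≥ 0; that is, the Laplacian kernel k(x, y) = exp(−‖x−y‖/h) is positive semidefinite on an inner product space. -/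
/-!
Since `exp (-‖x - y‖ / h) = exp (-‖x‖ / h) * exp (-‖y‖ / h) * exp (K x y / h)` with
`K x y = ‖x‖ + ‖y‖ - ‖x - y‖`, and the entrywise exponential of a positive semidefinite matrix is
positive semidefinite (Schur product theorem, term by term in the exponential series), it suffices
that `K` is positive semidefinite. Adjoining the point `0`, this is the conditional negative
definiteness of the norm: `∑ cᵢ cⱼ ‖xᵢ - xⱼ‖ ≤ 0` whenever `∑ cᵢ = 0`. That follows from
`√s = C⁻¹ ∫₀^∞ t^(1/2) (t⁻¹ - (t + s)⁻¹) dt` applied to `s = ‖xᵢ - xⱼ‖²`, because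
`(t + ‖x - y‖²)⁻¹ = ∫₀^∞ e^(-ut) e^(-u‖x - y‖²) du` is a mixture of Gaussian kernels, which are
positive semidefinite.
-/

open Matrix Real MeasureTheory Set
open scoped Nat ComplexOrder

namespace Matrix

variable {ι : Type*} [Fintype ι]

theorem posSemidef_iff_sum_sum_mul_mul {A : Matrix ι ι ℝ} :
    A.PosSemidef ↔ A.IsHermitian ∧ ∀ c : ι → ℝ, 0 ≤ ∑ i, ∑ j, c i * c j * A i j := by
  simp only [posSemidef_iff_dotProduct_mulVec, dotProduct, mulVec, star_trivial, Finset.mul_sum,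
    mul_assoc]
  simp_rw [mul_comm (A _ _)]

theorem PosSemidef.map_pow_s14 {𝕜 : Type*} [RCLike 𝕜] {A : Matrix ι ι 𝕜} (hA : A.PosSemidef)
    (k : ℕ) : (A.map (· ^ k)).PosSemidef := by
  induction k with
  | zero =>
    convert posSemidef_vecMulVec_self_star (1 : ι → 𝕜) using 1
    ext; simp
  | succ k ih =>
    convert ih.hadamard hA using 1
    ext; simp [pow_succ]

theorem PosSemidef.map_exp_s14 {A : Matrix ι ι ℝ} (hA : A.PosSemidef) :
    (A.map rexp).PosSemidef := by
  refine posSemidef_iff_sum_sum_mul_mul.2 ⟨hA.isHermitian.map _ fun _ => rfl, fun c => ?_⟩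
  have hsum : HasSum (fun k => ∑ i, ∑ j, c i * c j * ((k ! : ℝ)⁻¹ • A.map (· ^ k)) i j)
      (∑ i, ∑ j, c i * c j * A.map rexp i j) := by
    refine hasSum_sum fun i _ => hasSum_sum fun j _ => HasSum.mul_left _ ?_
    simpa [exp_eq_exp_ℝ, div_eq_inv_mul] using NormedSpace.expSeries_div_hasSum_exp (A i j)
  refine hsum.nonneg fun k => ?_
  exact (posSemidef_iff_sum_sum_mul_mul.1 ((hA.map_pow_s14 k).smul (by positivity))).2 c

theorem PosSemidef.exp_add_add {A : Matrix ι ι ℝ} (hA : A.PosSemidef) (a : ι → ℝ) :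
    (of fun i j => rexp (a i + a j + A i j)).PosSemidef := by
  have h_eq : (of fun i j => rexp (a i + a j + A i j)) =
      vecMulVec (rexp ∘ a) (star (rexp ∘ a)) ⊙ A.map rexp := by
    ext; simp [Real.exp_add, vecMulVec_apply]
  rw [h_eq]
  exact (posSemidef_vecMulVec_self_star _).hadamard hA.map_exp_s14

theorem posSemidef_integral {X : Type*} [MeasurableSpace X] {μ : Measure X}
    {K : X → Matrix ι ι ℝ} (hK : ∀ᵐ u ∂μ, (K u).PosSemidef)
    (hint : ∀ i j, Integrable (fun u => K u i j) μ) :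
    (of fun i j => ∫ u, K u i j ∂μ).PosSemidef := by
  refine posSemidef_iff_sum_sum_mul_mul.2 ⟨IsHermitian.ext fun i j => ?_, fun c => ?_⟩
  · refine integral_congr_ae (hK.mono fun u hu => ?_)
    simpa using hu.isHermitian.apply i j
  · have hsum : ∑ i, ∑ j, c i * c j * (of fun i j => ∫ u, K u i j ∂μ) i j =
        ∫ u, ∑ i, ∑ j, c i * c j * K u i j ∂μ := by
      rw [integral_finsetSum _ fun i _ => integrable_finsetSum _ fun j _ =>
        (hint i j).const_mul _]
      refine Finset.sum_congr rfl fun i _ => ?_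
      rw [integral_finsetSum _ fun j _ => (hint i j).const_mul _]
      simp only [of_apply, integral_const_mul]
    rw [hsum]
    exact integral_nonneg_of_ae (hK.mono fun u hu => (posSemidef_iff_sum_sum_mul_mul.1 hu).2 c)

end Matrix

section InnerProductSpace

variable {ι H : Type*} [Fintype ι] [NormedAddCommGroup H] [InnerProductSpace ℝ H]

theorem posSemidef_exp_neg_mul_norm_sub_sq (x : ι → H) {t : ℝ} (ht : 0 ≤ t) :
    (of fun i j => rexp (-(t * ‖x i - x j‖ ^ 2))).PosSemidef := by
  have h_eq : (of fun i j => rexp (-(t * ‖x i - x j‖ ^ 2))) =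
      of fun i j => rexp (-(t * ‖x i‖ ^ 2) + -(t * ‖x j‖ ^ 2) + ((2 * t) • gram ℝ x) i j) := by
    ext i j
    simp only [of_apply, Matrix.smul_apply, gram_apply, smul_eq_mul, norm_sub_sq_real]
    ring_nf
  rw [h_eq]
  exact ((posSemidef_gram ℝ x).smul (by positivity)).exp_add_add _

theorem posSemidef_inv_add_norm_sub_sq (x : ι → H) {t : ℝ} (ht : 0 < t) :
    (of fun i j => (t + ‖x i - x j‖ ^ 2)⁻¹).PosSemidef := by
  have hpos : ∀ i j, 0 < t + ‖x i - x j‖ ^ 2 := fun i j => by positivity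
  have h_integral : (of fun i j => (t + ‖x i - x j‖ ^ 2)⁻¹) =
      of fun i j => ∫ u in Ioi 0, rexp (-(t + ‖x i - x j‖ ^ 2) * u) := by
    ext i j
    rw [of_apply, of_apply, integral_exp_mul_Ioi (neg_lt_zero.2 (hpos i j)), mul_zero,
      Real.exp_zero, neg_div_neg_eq, one_div]
  rw [h_integral]
  refine posSemidef_integral (ae_restrict_of_forall_mem measurableSet_Ioi fun u hu => ?_)
    fun i j => integrableOn_exp_mul_Ioi (neg_lt_zero.2 (hpos i j)) 0
  have hu : (0 : ℝ) < u := hu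
  have h_gauss : (of fun i j => rexp (-(t + ‖x i - x j‖ ^ 2) * u)) =
      rexp (-(t * u)) • of fun i j => rexp (-(u * ‖x i - x j‖ ^ 2)) := by
    ext i j
    simp only [of_apply, Matrix.smul_apply, smul_eq_mul, ← Real.exp_add]
    ring_nf
  show (of fun i j => rexp (-(t + ‖x i - x j‖ ^ 2) * u)).PosSemidef
  rw [h_gauss]
  exact (posSemidef_exp_neg_mul_norm_sub_sq x hu.le).smul (Real.exp_pos _).le

theorem sum_sum_mul_mul_norm_sub_nonpos (x : ι → H) {c : ι → ℝ} (hc : ∑ i, c i = 0) :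
    ∑ i, ∑ j, c i * c j * ‖x i - x j‖ ≤ 0 := by
  have hhalf : (1 / 2 : ℝ) ∈ Ioo 0 1 := by norm_num
  set C := ∫ t in Ioi 0, rpowIntegrand₀₁ (1 / 2) t 1
  have hnorm : ∀ i j, ‖x i - x j‖ =
      C⁻¹ * ∫ t in Ioi 0, rpowIntegrand₀₁ (1 / 2) t (‖x i - x j‖ ^ 2) := fun i j => by
    rw [← rpow_eq_const_mul_integral hhalf (by positivity), ← sqrt_eq_rpow, sqrt_sq (norm_nonneg _)]
  have hint : ∀ i j, IntegrableOn (rpowIntegrand₀₁ (1 / 2) · (‖x i - x j‖ ^ 2)) (Ioi 0) :=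
    fun i j => integrableOn_rpowIntegrand₀₁_Ioi hhalf (sq_nonneg _)
  have hpointwise : ∀ t ∈ Ioi (0 : ℝ),
      ∑ i, ∑ j, c i * c j * rpowIntegrand₀₁ (1 / 2) t (‖x i - x j‖ ^ 2) ≤ 0 := by
    intro t (ht : 0 < t)
    have hQ := (posSemidef_iff_sum_sum_mul_mul.1 (posSemidef_inv_add_norm_sub_sq x ht)).2 c
    simp only [of_apply] at hQ
    have hsplit : ∑ i, ∑ j, c i * c j * rpowIntegrand₀₁ (1 / 2) t (‖x i - x j‖ ^ 2) =
        t ^ (1 / 2 : ℝ) * t⁻¹ * ((∑ i, c i) * ∑ j, c j) -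
          t ^ (1 / 2 : ℝ) * ∑ i, ∑ j, c i * c j * (t + ‖x i - x j‖ ^ 2)⁻¹ := by
      rw [Finset.sum_mul_sum, Finset.mul_sum, Finset.mul_sum, ← Finset.sum_sub_distrib]
      refine Finset.sum_congr rfl fun i _ => ?_
      rw [Finset.mul_sum, Finset.mul_sum, ← Finset.sum_sub_distrib]
      refine Finset.sum_congr rfl fun j _ => ?_
      rw [rpowIntegrand₀₁]
      ring
    rw [hsplit, hc, zero_mul, mul_zero, zero_sub, neg_nonpos]
    exact mul_nonneg (by positivity) hQ
  have hC : 0 < C := integral_rpowIntegrand₀₁_one_pos hhalf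
  calc ∑ i, ∑ j, c i * c j * ‖x i - x j‖
      = C⁻¹ * ∫ t in Ioi 0,
          ∑ i, ∑ j, c i * c j * rpowIntegrand₀₁ (1 / 2) t (‖x i - x j‖ ^ 2) := by
        rw [integral_finsetSum _ fun i _ => integrable_finsetSum _ fun j _ =>
          (hint i j).const_mul _, Finset.mul_sum]
        refine Finset.sum_congr rfl fun i _ => ?_
        rw [integral_finsetSum _ fun j _ => (hint i j).const_mul _, Finset.mul_sum]
        refine Finset.sum_congr rfl fun j _ => ?_
        conv_lhs => rw [hnorm i j]
        rw [integral_const_mul]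
        ring
    _ ≤ 0 := mul_nonpos_of_nonneg_of_nonpos (inv_nonneg.2 hC.le)
        (setIntegral_nonpos measurableSet_Ioi hpointwise)

theorem posSemidef_norm_add_norm_sub_norm_sub (x : ι → H) :
    (of fun i j => ‖x i‖ + ‖x j‖ - ‖x i - x j‖).PosSemidef := by
  refine posSemidef_iff_sum_sum_mul_mul.2 ⟨IsHermitian.ext fun i j => ?_, fun c => ?_⟩
  · simp only [of_apply, star_trivial, norm_sub_rev (x j)]
    ring
  · -- adjoin the point `0` with weight `-∑ i, c i`
    have h := sum_sum_mul_mul_norm_sub_nonpos (Option.elim · 0 x)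
      (c := (Option.elim · (-∑ i, c i) c)) (by simp [Fintype.sum_option])
    simp only [Fintype.sum_option, Option.elim, zero_sub, sub_zero, norm_zero, norm_neg,
      mul_zero, zero_add] at h
    have hsplit : ∑ i, ∑ j, c i * c j * (of fun i j => ‖x i‖ + ‖x j‖ - ‖x i - x j‖) i j =
        (∑ i, c i * ‖x i‖) * (∑ j, c j) + (∑ i, c i) * (∑ j, c j * ‖x j‖) -
          ∑ i, ∑ j, c i * c j * ‖x i - x j‖ := by
      rw [Finset.sum_mul_sum, Finset.sum_mul_sum, ← Finset.sum_add_distrib,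
        ← Finset.sum_sub_distrib]
      refine Finset.sum_congr rfl fun i _ => ?_
      rw [← Finset.sum_add_distrib, ← Finset.sum_sub_distrib]
      refine Finset.sum_congr rfl fun j _ => ?_
      rw [of_apply]
      ring
    simp only [Finset.sum_add_distrib, mul_comm (c _) (-_), mul_assoc (-∑ i, c i),
      ← Finset.mul_sum] at h
    rw [hsplit]
    linarith

theorem posSemidef_exp_neg_norm_sub_div (x : ι → H) {h : ℝ} (hh : 0 < h) :
    (of fun i j => rexp (-‖x i - x j‖ / h)).PosSemidef := by
  have h_eq : (of fun i j => rexp (-‖x i - x j‖ / h)) = of fun i j =>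
      rexp (-‖x i‖ / h + -‖x j‖ / h + (h⁻¹ • of fun i j => ‖x i‖ + ‖x j‖ - ‖x i - x j‖) i j) := by
    ext i j
    simp only [of_apply, Matrix.smul_apply, smul_eq_mul]
    ring_nf
  rw [h_eq]
  exact ((posSemidef_norm_add_norm_sub_norm_sub x).smul (inv_nonneg.2 hh.le)).exp_add_add _

end InnerProductSpace

/-- The Laplacian kernel `k(x, y) = exp (−‖x − y‖ / h)` is positive semidefinite on a real
inner product space. -/
theorem laplacian_kernel_posSemidef {H : Type*} [NormedAddCommGroup H]
    [InnerProductSpace ℝ H] (h : ℝ) (hh : 0 < h) :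
    ∀ (n : ℕ) (x : Fin n → H) (c : Fin n → ℝ),
      0 ≤ ∑ i : Fin n, ∑ j : Fin n,
        c i * c j * Real.exp (-‖x i - x j‖ / h) := by
  intro n x c
  exact (Matrix.posSemidef_iff_sum_sum_mul_mul.1 (posSemidef_exp_neg_norm_sub_div x hh)).2 c
end
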